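/- Correctness of Antimirov's construction (one direction): for every regular expression e over α, the language of e is contained in the language accepted by the Antimirov automaton of e. Concretely, if w ∈ matches' e then w is accepted by the NFA whose states are regular expressions over α, whose transition function is the Antimirov derivative ∂, whose initial states are ι(e), and whose accepting states are the nullable expressions. -/

import Mathlib

/-- The Antimirov derivative of a regular expression with respect to a letter. -/
def aderiv {α : Type*} : RegularExpression α → α → Set (RegularExpression α)
  | .zero, _ => ∅
  | .epsilon, _ => ∅
  | .char b, a => {f | a = b ∧ f = 1}
  | .plus e f, a => aderiv e a ∪ aderiv f a
  | .comp e f, a =>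
      (fun e' => e' * f) '' aderiv e a ∪ {f' | f' ∈ aderiv f a ∧ [] ∈ e.matches'}
  | .star e, a => (fun e' => e' * e.star) '' aderiv e a

/-- The initial states of the Antimirov automaton of a regular expression. -/
def ini {α : Type*} : RegularExpression α → Set (RegularExpression α)
  | .zero => ∅
  | .epsilon => {1}
  | .char a => {RegularExpression.char a}
  | .plus e f => ini e ∪ ini f
  | .comp e f => (fun e' => e' * f) '' ini e
  | .star e => (fun e' => e' * e.star) '' ini e ∪ {1}

/-- The Antimirov automaton of `e`: states are regular expressions, transitions are Antimirov
derivatives, initial states are `ι(e)`, and accepting states are the nullable expressions. -/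
def antimirovNFA {α : Type*} (e : RegularExpression α) : NFA α (RegularExpression α) where
  step := fun e' a => aderiv e' a
  start := ini e
  accept := {f | [] ∈ f.matches'}

/-! A word of `e` is a word of some `e' ∈ ι(e)`, and a word `a :: w` of an expression `f` is a
word `w` of some `f' ∈ ∂(f, a)`. Following such derivatives letter by letter therefore ends in an
expression matching `[]`, which is an accepting state. -/

open Computability

namespace Language

theorem exists_cons_mem_of_cons_mem_kstar {α : Type*} {l : Language α} {a : α} {w : List α}
    (h : a :: w ∈ l∗) : ∃ u v, a :: u ∈ l ∧ v ∈ l∗ ∧ w = u ++ v := by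
  obtain ⟨L, hL, hmem⟩ := mem_kstar_iff_exists_nonempty.1 h
  rcases L with _ | ⟨_ | ⟨b, u⟩, L⟩
  · simp at hL
  · exact absurd rfl (hmem [] List.mem_cons_self).2
  · simp only [List.flatten_cons, List.cons_append, List.cons.injEq] at hL
    obtain ⟨rfl, rfl⟩ := hL
    exact ⟨u, L.flatten, (hmem _ List.mem_cons_self).1,
      join_mem_kstar fun y hy => (hmem y (List.mem_cons_of_mem _ hy)).1, rfl⟩

end Language

namespace NFA

theorem mem_acceptsFrom_of_simulation {α σ : Type*} (M : NFA α σ) (L : σ → Language α)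
    (hstep : ∀ s a w, a :: w ∈ L s → ∃ t ∈ M.step s a, w ∈ L t)
    (haccept : ∀ s, [] ∈ L s → s ∈ M.accept) (w : List α) :
    ∀ {S : Set σ} {s : σ}, s ∈ S → w ∈ L s → w ∈ M.acceptsFrom S := by
  induction w with
  | nil => exact fun hs hw => (nil_mem_acceptsFrom M).2 ⟨_, hs, haccept _ hw⟩
  | cons a w ih =>
    intro S s hs hw
    obtain ⟨t, ht, hwt⟩ := hstep s a w hw
    exact (cons_mem_acceptsFrom M).2 (ih (mem_stepSet.2 ⟨s, hs, ht⟩) hwt)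

end NFA

namespace RegularExpression

variable {α : Type*}

theorem append_mem_matches'_mul {e f : RegularExpression α} {u v : List α}
    (hu : u ∈ e.matches') (hv : v ∈ f.matches') : u ++ v ∈ (e * f).matches' := by
  rw [matches'_mul]
  exact Language.append_mem_mul hu hv

theorem exists_mem_aderiv_of_cons_mem_matches' (e : RegularExpression α) (a : α) (w : List α)
    (h : a :: w ∈ e.matches') : ∃ e' ∈ aderiv e a, w ∈ e'.matches' := by
  induction e generalizing w with
  | zero => simp [matches'] at h
  | epsilon => simp [matches'] at h
  | char b =>
    simp only [matches'] at h
    obtain ⟨rfl, rfl⟩ := h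
    exact ⟨1, ⟨rfl, rfl⟩, rfl⟩
  | plus e f ihe ihf =>
    rcases h with h | h
    · exact (ihe w h).imp fun _ => And.imp_left Or.inl
    · exact (ihf w h).imp fun _ => And.imp_left Or.inr
  | comp e f ihe ihf =>
    rw [comp_def, matches'_mul, Language.mem_mul] at h
    obtain ⟨_ | ⟨b, u⟩, hu, v, hv, huv⟩ := h
    · obtain ⟨f', hf', hw⟩ := ihf w (huv ▸ hv)
      exact ⟨f', Or.inr ⟨hf', hu⟩, hw⟩
    · simp only [List.cons_append, List.cons.injEq] at huv
      obtain ⟨rfl, rfl⟩ := huv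
      obtain ⟨e', he', hu'⟩ := ihe u hu
      exact ⟨e' * f, Or.inl ⟨e', he', rfl⟩, append_mem_matches'_mul hu' hv⟩
  | star e ihe =>
    rw [matches'_star] at h
    obtain ⟨u, v, hu, hv, rfl⟩ := Language.exists_cons_mem_of_cons_mem_kstar h
    obtain ⟨e', he', hu'⟩ := ihe u hu
    exact ⟨e' * e.star, ⟨e', he', rfl⟩, append_mem_matches'_mul hu' (by rwa [matches'_star])⟩

theorem exists_mem_ini_of_mem_matches' (e : RegularExpression α) (w : List α)
    (h : w ∈ e.matches') : ∃ e' ∈ ini e, w ∈ e'.matches' := by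
  induction e generalizing w with
  | zero => simp [matches'] at h
  | epsilon => exact ⟨1, rfl, h⟩
  | char b => exact ⟨char b, rfl, h⟩
  | plus e f ihe ihf =>
    rcases h with h | h
    · exact (ihe w h).imp fun _ => And.imp_left Or.inl
    · exact (ihf w h).imp fun _ => And.imp_left Or.inr
  | comp e f ihe ihf =>
    rw [comp_def, matches'_mul, Language.mem_mul] at h
    obtain ⟨u, hu, v, hv, rfl⟩ := h
    obtain ⟨e', he', hu'⟩ := ihe u hu
    exact ⟨e' * f, ⟨e', he', rfl⟩, append_mem_matches'_mul hu' hv⟩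
  | star e ihe =>
    rcases w with _ | ⟨a, w⟩
    · exact ⟨1, Or.inr rfl, rfl⟩
    rw [matches'_star] at h
    obtain ⟨u, v, hu, hv, rfl⟩ := Language.exists_cons_mem_of_cons_mem_kstar h
    obtain ⟨e', he', hu'⟩ := ihe (a :: u) hu
    exact ⟨e' * e.star, Or.inl ⟨e', he', rfl⟩,
      append_mem_matches'_mul hu' (by rwa [matches'_star])⟩

end RegularExpression

/-- One half of the correctness of Antimirov's construction: the language of `e` is contained
in the language accepted by its Antimirov automaton. -/
theorem antimirov_accepts {α : Type*} (e : RegularExpression α) (w : List α)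
    (hw : w ∈ e.matches') : w ∈ (antimirovNFA e).accepts := by
  obtain ⟨e', he', hw'⟩ := RegularExpression.exists_mem_ini_of_mem_matches' e w hw
  rw [NFA.accepts_eq_acceptsFrom_start]
  exact NFA.mem_acceptsFrom_of_simulation _ RegularExpression.matches'
    RegularExpression.exists_mem_aderiv_of_cons_mem_matches' (fun _ h => h) w he' hw'
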